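/- arXiv:1408.5515 — 4 statements merged into one kernel-verified Lean document; each statement's English description precedes it below -/
import Mathlib

section
/- Let R be a commutative Noetherian ring, F a finitely generated R-module, and M = Q_1 ∩ … ∩ Q_m a reduced primary decomposition of a submodule M ⊆ F, with Q_i being P_i-primary in F. Let P = P_i for some i, and let Q be any P-primary submodule of F with M ⊆ Q. Then M = Q_1 ∩ … ∩ Q_{i-1} ∩ Q ∩ Q_{i+1} ∩ … ∩ Q_m (i.e., Q is a valid P-primary component of M) if and only if Q ∩ (M_[P] :_F P^∞) = M_[P]. -/
/-- `N` is a `P`-primary submodule of `F`: `N` is proper, and `r • v ∈ N` implies `v ∈ N` or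
`r ∈ √(Ann_R(F/N))`, where `P = √(Ann_R(F/N)) = √(N :_R F)`. -/
def Submodule.IsPrimaryIn {R F : Type*} [CommRing R] [AddCommGroup F] [Module R F]
    (P : Ideal R) (N : Submodule R F) : Prop :=
  N ≠ ⊤ ∧ (∀ (r : R) (v : F), r • v ∈ N → v ∈ N ∨ r ∈ (Submodule.colon N ⊤).radical) ∧
    P = (Submodule.colon N ⊤).radical

/-- `M_[P] = {b ∈ F | (M :_R b) ⊄ P}`. -/
def Submodule.locSet {R F : Type*} [CommRing R] [AddCommGroup F] [Module R F]
    (M : Submodule R F) (P : Ideal R) : Set F :=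
  {b : F | ¬ Submodule.colon M (Submodule.span R {b}) ≤ P}

/-- `(M_[P] :_F P^∞) = ⋃_{n ≥ 1} {b ∈ F | P^n • b ⊆ M_[P]}`. -/
def Submodule.satSet {R F : Type*} [CommRing R] [AddCommGroup F] [Module R F]
    (M : Submodule R F) (P : Ideal R) : Set F :=
  {b : F | ∃ n : ℕ, 1 ≤ n ∧ ∀ p ∈ P ^ n, p • b ∈ Submodule.locSet M P}


/-!
For a decomposition `M = ⋂ Qⱼ` into `Pⱼ`-primary submodules and a prime `p`, an element `b`
lies in `M_[p]` iff it lies in every `Qⱼ` with `Pⱼ ⊆ p`: the ideal `⋂_{Pⱼ ⊄ p} (Qⱼ :_R F)` is not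
contained in `p`, and any of its elements outside `p` multiplies `b` into `M`. Taking `p = Pᵢ`,
the saturation `(M_[Pᵢ] :_F Pᵢ^∞)` is the same intersection with `Qᵢ` left out, because the
primes are distinct. Hence `Qᵢ ∩ (M_[Pᵢ] :_F Pᵢ^∞) = M_[Pᵢ]` for every component of every such
decomposition, in particular for `Q'` once it is one; conversely, the criterion says that `Q'`
and `Qᵢ` agree on the saturation, which contains the other components.
-/

namespace Submodule.IsPrimaryIn

variable {R F : Type*} [CommRing R] [AddCommGroup F] [Module R F] {P : Ideal R}
  {N : Submodule R F}

theorem mem_of_smul_mem (hN : IsPrimaryIn P N) {r : R} {v : F} (hrv : r • v ∈ N)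
    (hr : r ∉ P) : v ∈ N :=
  (hN.2.1 r v hrv).resolve_right (hN.2.2 ▸ hr)

theorem colon_span_singleton_le (hN : IsPrimaryIn P N) {M : Submodule R F} (hMN : M ≤ N)
    {b : F} (hb : b ∉ N) : M.colon (span R {b}) ≤ P := fun _ hr ↦
  by_contra fun hrP ↦ hb (hN.mem_of_smul_mem (hMN (mem_colon_span_singleton.mp hr)) hrP)

theorem not_colon_le_of_not_le (hN : IsPrimaryIn P N) {p : Ideal R} [hp : p.IsPrime]
    (hP : ¬ P ≤ p) : ¬ N.colon ⊤ ≤ p := fun h ↦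
  hP (hN.2.2 ▸ hp.radical_le_iff.mpr h)

theorem exists_pow_le_colon [IsNoetherianRing R] (hN : IsPrimaryIn P N) :
    ∃ n : ℕ, P ^ n ≤ N.colon ⊤ :=
  Ideal.exists_pow_le_of_le_radical_of_fg hN.2.2.le (IsNoetherian.noetherian _)

end Submodule.IsPrimaryIn

namespace Submodule

variable {R F ι : Type*} [CommRing R] [AddCommGroup F] [Module R F] [Fintype ι]
  {M : Submodule R F} {Q : ι → Submodule R F} {P : ι → Ideal R}

theorem exists_notMem_forall_smul_mem (hQ : ∀ j, IsPrimaryIn (P j) (Q j)) (p : Ideal R)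
    [hp : p.IsPrime] : ∃ r ∉ p, ∀ j, ¬ P j ≤ p → ∀ v : F, r • v ∈ Q j := by
  classical
  set s := Finset.univ.filter fun j ↦ ¬ P j ≤ p
  have hinf : ¬ s.inf (fun j ↦ (Q j).colon ⊤) ≤ p := by
    rw [hp.inf_le']
    rintro ⟨j, hj, hjp⟩
    exact (hQ j).not_colon_le_of_not_le (Finset.mem_filter.mp hj).2 hjp
  obtain ⟨r, hr, hrp⟩ := SetLike.not_le_iff_exists.mp hinf
  refine ⟨r, hrp, fun j hj v ↦ ?_⟩
  have hle : s.inf (fun j ↦ (Q j).colon ⊤) ≤ (Q j).colon ⊤ :=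
    Finset.inf_le ((Finset.mem_filter_univ j).mpr hj)
  exact mem_colon.mp (hle hr) v trivial

theorem mem_locSet_iff (hQ : ∀ j, IsPrimaryIn (P j) (Q j)) (hdec : M = ⨅ j, Q j)
    (p : Ideal R) [p.IsPrime] {b : F} : b ∈ M.locSet p ↔ ∀ j, P j ≤ p → b ∈ Q j := by
  have hMQ : ∀ j, M ≤ Q j := fun j ↦ hdec ▸ iInf_le Q j
  refine ⟨fun hb j hjp ↦ by_contra fun hbj ↦
    hb ((hQ j).colon_span_singleton_le (hMQ j) hbj |>.trans hjp), fun hb hle ↦ ?_⟩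
  obtain ⟨r, hrp, hr⟩ := exists_notMem_forall_smul_mem hQ p
  refine hrp (hle (mem_colon_span_singleton.mpr ?_))
  rw [hdec, mem_iInf]
  intro j
  by_cases hjp : P j ≤ p
  · exact smul_mem _ r (hb j hjp)
  · exact hr j hjp b

theorem mem_satSet_iff [IsNoetherianRing R] (hprime : ∀ j, (P j).IsPrime)
    (hQ : ∀ j, IsPrimaryIn (P j) (Q j)) (hdec : M = ⨅ j, Q j) (hdist : Function.Injective P)
    (i : ι) {b : F} : b ∈ M.satSet (P i) ↔ ∀ j ≠ i, P j ≤ P i → b ∈ Q j := by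
  constructor
  · rintro ⟨n, -, hb⟩ j hji hj
    obtain ⟨p, hpi, hpj⟩ := SetLike.not_le_iff_exists.mp
      fun h ↦ hji (hdist (le_antisymm hj h))
    have hpb : p ^ n • b ∈ Q j :=
      (mem_locSet_iff hQ hdec (P i)).mp (hb _ (Ideal.pow_mem_pow hpi n)) j hj
    exact (hQ j).mem_of_smul_mem hpb fun h ↦ hpj ((hprime j).mem_of_pow_mem n h)
  · intro hb
    obtain ⟨n, hn⟩ := (hQ i).exists_pow_le_colon
    refine ⟨n + 1, n.succ_pos, fun p hp ↦ (mem_locSet_iff hQ hdec (P i)).mpr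
      fun j hj ↦ ?_⟩
    by_cases hji : j = i
    · subst hji
      exact mem_colon.mp (hn (Ideal.pow_le_pow_right n.le_succ hp)) b trivial
    · exact smul_mem _ p (hb j hji hj)

theorem inter_satSet_eq_locSet [IsNoetherianRing R] (hprime : ∀ j, (P j).IsPrime)
    (hQ : ∀ j, IsPrimaryIn (P j) (Q j)) (hdec : M = ⨅ j, Q j) (hdist : Function.Injective P)
    (i : ι) : (Q i : Set F) ∩ M.satSet (P i) = M.locSet (P i) := by
  ext b
  rw [Set.mem_inter_iff, SetLike.mem_coe, mem_satSet_iff hprime hQ hdec hdist i,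
    mem_locSet_iff hQ hdec (P i)]
  refine ⟨fun ⟨hbi, hb⟩ j hj ↦ ?_, fun hb ↦ ⟨hb i le_rfl, fun j _ ↦ hb j⟩⟩
  rcases eq_or_ne j i with rfl | hji
  exacts [hbi, hb j hji hj]

end Submodule

theorem iInf_update_eq_inf_iInf_ne {α ι : Type*} [CompleteLattice α] [DecidableEq ι]
    (f : ι → α) (i : ι) (a : α) : ⨅ j, Function.update f i a j = a ⊓ ⨅ j ∈ {j | j ≠ i}, f j := by
  rw [iInf_split_single _ i, Function.update_self]
  congr 1
  exact iInf_congr fun j ↦ iInf_congr fun hj ↦ Function.update_of_ne hj a f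

theorem primaryComponent_iff_general {R F : Type*} [CommRing R] [IsNoetherianRing R]
    [AddCommGroup F] [Module R F] {m : ℕ} (M : Submodule R F)
    (Q : Fin m → Submodule R F) (P : Fin m → Ideal R) (hprime : ∀ i, (P i).IsPrime)
    (hQ : ∀ i, Submodule.IsPrimaryIn (P i) (Q i))
    (hdec : M = ⨅ i, Q i) (hdist : Function.Injective P)
    (i : Fin m) (Q' : Submodule R F) (hQ' : Submodule.IsPrimaryIn (P i) Q') :
    M = Q' ⊓ ⨅ j ∈ {j | j ≠ i}, Q j ↔
      (Q' : Set F) ∩ Submodule.satSet M (P i) = Submodule.locSet M (P i) := by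
  refine ⟨fun hM ↦ ?_, fun hset ↦ ?_⟩
  · have hQ'' : ∀ j, Submodule.IsPrimaryIn (P j) (Function.update Q i Q' j) :=
      (Function.forall_update_iff Q fun j N ↦ Submodule.IsPrimaryIn (P j) N).mpr
        ⟨hQ', fun j _ ↦ hQ j⟩
    simpa using Submodule.inter_satSet_eq_locSet hprime hQ''
      (hM.trans (iInf_update_eq_inf_iInf_ne Q i Q').symm) hdist i
  · rw [← Submodule.inter_satSet_eq_locSet hprime hQ hdec hdist i] at hset
    have hsat : ∀ b ∈ ⨅ j ∈ {j | j ≠ i}, Q j, b ∈ M.satSet (P i) := fun b hb ↦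
      (Submodule.mem_satSet_iff hprime hQ hdec hdist i).mpr fun j hji _ ↦
        (Submodule.mem_iInf _).mp ((Submodule.mem_iInf _).mp hb j) hji
    refine hdec.trans ((iInf_split_single Q i).trans (SetLike.ext fun b ↦ ?_))
    simp only [Submodule.mem_inf]
    refine and_congr_left fun hb ↦ ?_
    simpa [hsat b hb] using (Set.ext_iff.mp hset b).symm

/-- Given a reduced primary decomposition `M = Q_1 ∩ … ∩ Q_m` of `M ⊆ F`, `P = P_i`, and a
`P`-primary submodule `Q'` of `F` containing `M`: `Q'` is a valid `P`-primary component of `M`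
iff `Q' ∩ (M_[P] :_F P^∞) = M_[P]`. -/
theorem primaryComponent_iff {R F : Type*} [CommRing R] [IsNoetherianRing R]
    [AddCommGroup F] [Module R F] [Module.Finite R F] {m : ℕ} (M : Submodule R F)
    (Q : Fin m → Submodule R F) (P : Fin m → Ideal R) (hprime : ∀ i, (P i).IsPrime)
    (hQ : ∀ i, Submodule.IsPrimaryIn (P i) (Q i))
    (hdec : M = ⨅ i, Q i) (hdist : Function.Injective P)
    (hirr : ∀ i, ¬ (⨅ j ∈ {j | j ≠ i}, Q j) ≤ Q i)
    (i : Fin m) (Q' : Submodule R F) (hQ' : Submodule.IsPrimaryIn (P i) Q') (hMQ' : M ≤ Q') :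
    M = Q' ⊓ ⨅ j ∈ {j | j ≠ i}, Q j ↔
      (Q' : Set F) ∩ Submodule.satSet M (P i) = Submodule.locSet M (P i) :=
  primaryComponent_iff_general M Q P hprime hQ hdec hdist i Q' hQ'
end

section
/- Let R be a commutative Noetherian ring, F a finitely generated R-module, and M = Q_1 ∩ … ∩ Q_m a reduced primary decomposition of a submodule M ⊆ F, with Q_i being P_i-primary in F. If P_j ⊊ P are two of the associated primes of this decomposition, then (M_[P] :_F P^∞) ⊆ M_[P_j] and M_[P_j] ⊆ Q_j. -/
namespace Submodule

variable {R F : Type*} [CommRing R] [AddCommGroup F] [Module R F]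

theorem mem_locSet_iff_s10 {M : Submodule R F} {P : Ideal R} {b : F} :
    b ∈ M.locSet P ↔ ∃ r, r • b ∈ M ∧ r ∉ P := by
  simp only [locSet, Set.mem_ofPred_eq, SetLike.not_le_iff_exists, mem_colon_span_singleton]

theorem locSet_anti (M : Submodule R F) {P I : Ideal R} (h : P ≤ I) :
    M.locSet I ⊆ M.locSet P := fun _ hb =>
  let ⟨r, hr, hrI⟩ := mem_locSet_iff_s10.1 hb
  mem_locSet_iff_s10.2 ⟨r, hr, fun hrP => hrI (h hrP)⟩

theorem mem_locSet_of_smul_mem {M : Submodule R F} {P : Ideal R} (hP : P.IsPrime) {s : R}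
    (hs : s ∉ P) {b : F} (hb : s • b ∈ M.locSet P) : b ∈ M.locSet P := by
  obtain ⟨r, hr, hrP⟩ := mem_locSet_iff_s10.1 hb
  refine mem_locSet_iff_s10.2 ⟨r * s, by rwa [mul_smul], ?_⟩
  exact hP.mul_mem_iff_mem_or_mem.not.2 (not_or.2 ⟨hrP, hs⟩)

/-- Any `p ∈ I \ P` witnesses this: `p ^ n • b ∈ M_[I] ⊆ M_[P]`, and `p ^ n ∉ P` can be
cancelled. -/
theorem satSet_subset_locSet (M : Submodule R F) {P I : Ideal R} (hP : P.IsPrime) (h : P < I) :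
    M.satSet I ⊆ M.locSet P := by
  rintro b ⟨n, -, hb⟩
  obtain ⟨p, hpI, hpP⟩ := SetLike.exists_of_lt h
  exact mem_locSet_of_smul_mem hP (fun hpn => hpP (hP.mem_of_pow_mem n hpn))
    (M.locSet_anti h.le (hb _ (Ideal.pow_mem_pow hpI n)))

theorem locSet_subset_of_isPrimaryIn {M Q : Submodule R F} {P : Ideal R} (hQ : IsPrimaryIn P Q)
    (hMQ : M ≤ Q) : M.locSet P ⊆ Q := fun b hb => by
  obtain ⟨-, hprimary, hrad⟩ := hQ
  obtain ⟨r, hr, hrP⟩ := mem_locSet_iff_s10.1 hb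
  exact (hprimary r b (hMQ hr)).resolve_right (hrad ▸ hrP)

end Submodule

theorem satSet_subset_locSet_of_lt_general {R F : Type*} [CommRing R]
    [AddCommGroup F] [Module R F] {m : ℕ} (M : Submodule R F)
    (Q : Fin m → Submodule R F) (P : Fin m → Ideal R) (hprime : ∀ i, (P i).IsPrime)
    (hQ : ∀ i, Submodule.IsPrimaryIn (P i) (Q i))
    (hdec : M = ⨅ i, Q i)
    (i j : Fin m) (hij : P j < P i) :
    Submodule.satSet M (P i) ⊆ Submodule.locSet M (P j) ∧
      Submodule.locSet M (P j) ⊆ (Q j : Set F) :=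
  ⟨M.satSet_subset_locSet (hprime j) hij,
    Submodule.locSet_subset_of_isPrimaryIn (hQ j) (hdec ▸ iInf_le Q j)⟩

/-- If `P_j ⊊ P = P_i` are associated primes of a reduced primary decomposition
`M = Q_1 ∩ … ∩ Q_m`, then `(M_[P] :_F P^∞) ⊆ M_[P_j]` and `M_[P_j] ⊆ Q_j`. -/
theorem satSet_subset_locSet_of_lt {R F : Type*} [CommRing R] [IsNoetherianRing R]
    [AddCommGroup F] [Module R F] [Module.Finite R F] {m : ℕ} (M : Submodule R F)
    (Q : Fin m → Submodule R F) (P : Fin m → Ideal R) (hprime : ∀ i, (P i).IsPrime)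
    (hQ : ∀ i, Submodule.IsPrimaryIn (P i) (Q i))
    (hdec : M = ⨅ i, Q i) (hdist : Function.Injective P)
    (hirr : ∀ i, ¬ (⨅ j ∈ {j | j ≠ i}, Q j) ≤ Q i)
    (i j : Fin m) (hij : P j < P i) :
    Submodule.satSet M (P i) ⊆ Submodule.locSet M (P j) ∧
      Submodule.locSet M (P j) ⊆ (Q j : Set F) :=
  satSet_subset_locSet_of_lt_general M Q P hprime hQ hdec i j hij
end

section
/- Let R be a commutative Noetherian ring, F a finitely generated R-module, and M = Q_1 ∩ … ∩ Q_m a reduced primary decomposition of a submodule M ⊆ F, with Q_i being P_i-primary in F. Then for any P = P_i of the decomposition, the saturation (M_[P] :_F P^∞) equals the intersection of those components Q_j whose associated prime satisfies P_j ⊊ P (the empty intersection being F). -/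
/-!
Both `M ↦ M_[P]` and `M ↦ (M_[P] :_F P^∞)` commute with finite intersections when `P` is
prime, so it suffices to compute the saturation of a single `P'`-primary component `Q`. If
`P' ⊄ P`, some element outside `P` kills `F/Q`, so `Q_[P] = F`. If `P' = P`, then `P^n F ⊆ Q`
for some `n`, since `P` is finitely generated. If `P' ⊊ P`, pick `p ∈ P \ P'`: from
`r p^n b ∈ Q` with `r ∉ P` the primary condition gives `b ∈ Q`, so the saturation is `Q`
itself.
-/

namespace Submodule

variable {R F : Type*} [CommRing R] [AddCommGroup F] [Module R F]

section IsPrimaryIn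

variable {P : Ideal R} {Q : Submodule R F}

theorem IsPrimaryIn.isPrimary (hQ : IsPrimaryIn P Q) : Q.IsPrimary :=
  ⟨hQ.1, fun hrv => hQ.2.1 _ _ hrv⟩

theorem IsPrimaryIn.isPrime (hQ : IsPrimaryIn P Q) : P.IsPrime :=
  hQ.2.2 ▸ hQ.isPrimary.isPrime_radical_colon

theorem IsPrimaryIn.mem_of_smul_mem_s12 (hQ : IsPrimaryIn P Q) {r : R} (hr : r ∉ P) {v : F}
    (hrv : r • v ∈ Q) : v ∈ Q :=
  (hQ.2.1 r v hrv).resolve_right (hQ.2.2 ▸ hr)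

theorem IsPrimaryIn.exists_pow_le_colon_s12 [IsNoetherianRing R] (hQ : IsPrimaryIn P Q) :
    ∃ n : ℕ, P ^ n ≤ Q.colon ⊤ := by
  rw [hQ.2.2]
  exact Ideal.exists_radical_pow_le_of_fg _ (IsNoetherian.noetherian _)

theorem IsPrimaryIn.exists_notMem_smul_mem_of_not_le (hQ : IsPrimaryIn P Q) {P' : Ideal R}
    [P'.IsPrime] (hP : ¬ P ≤ P') : ∃ c ∉ P', ∀ v : F, c • v ∈ Q := by
  obtain ⟨r, hrP, hrP'⟩ := SetLike.not_le_iff_exists.mp hP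
  obtain ⟨k, hk⟩ := Ideal.mem_radical_iff.mp (hQ.2.2 ▸ hrP)
  exact ⟨r ^ k, fun h => hrP' (Ideal.IsPrime.mem_of_pow_mem ‹_› k h),
    fun v => mem_colon.mp hk v trivial⟩

end IsPrimaryIn

section locSet

variable {P : Ideal R} {M N : Submodule R F}

theorem mem_locSet {b : F} : b ∈ M.locSet P ↔ ∃ r ∉ P, r • b ∈ M := by
  simp only [locSet, Set.mem_ofPred_eq, SetLike.not_le_iff_exists, mem_colon_span_singleton,
    and_comm]

theorem locSet_mono (h : M ≤ N) : M.locSet P ⊆ N.locSet P := fun _ hb =>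
  let ⟨r, hr, hrb⟩ := mem_locSet.mp hb
  mem_locSet.mpr ⟨r, hr, h hrb⟩

theorem coe_subset_locSet (hP : P ≠ ⊤) : (M : Set F) ⊆ M.locSet P := fun b hb =>
  mem_locSet.mpr ⟨1, fun h => hP ((Ideal.eq_top_iff_one P).mpr h), by rwa [one_smul]⟩

theorem locSet_iInf {ι : Type*} [Fintype ι] [P.IsPrime] (Q : ι → Submodule R F) :
    (⨅ j, Q j).locSet P = ⋂ j, (Q j).locSet P := by
  refine subset_antisymm (Set.subset_iInter fun j => locSet_mono (iInf_le Q j)) fun b hb => ?_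
  choose c hcP hcQ using fun j => mem_locSet.mp (Set.mem_iInter.mp hb j)
  refine mem_locSet.mpr ⟨∏ j, c j, fun h => ?_, mem_iInf _ |>.mpr fun j => ?_⟩
  · obtain ⟨j, -, hj⟩ := Ideal.IsPrime.prod_mem_iff.mp h
    exact hcP j hj
  · obtain ⟨t, ht⟩ := Finset.dvd_prod_of_mem c (Finset.mem_univ j)
    rw [ht, mul_comm, mul_smul]
    exact (Q j).smul_mem t (hcQ j)

end locSet

section satSet

variable {P P' : Ideal R} {Q : Submodule R F}

theorem satSet_iInf {ι : Type*} [Fintype ι] [P.IsPrime] (Q : ι → Submodule R F) :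
    (⨅ j, Q j).satSet P = ⋂ j, (Q j).satSet P := by
  refine subset_antisymm (Set.subset_iInter fun j => ?_) fun b hb => ?_
  · rintro b ⟨n, hn, hb⟩
    exact ⟨n, hn, fun p hp => locSet_mono (iInf_le Q j) (hb p hp)⟩
  · choose n _ hnb using Set.mem_iInter.mp hb
    refine ⟨Finset.univ.sup n ⊔ 1, le_sup_right, fun p hp => ?_⟩
    rw [locSet_iInf]
    refine Set.mem_iInter.mpr fun j => hnb j p (Ideal.pow_le_pow_right ?_ hp)
    exact le_sup_of_le_left (Finset.le_sup (Finset.mem_univ j))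

theorem satSet_eq_of_lt (hQ : IsPrimaryIn P' Q) (hlt : P' < P) (hP : P ≠ ⊤) :
    Q.satSet P = Q := by
  refine subset_antisymm ?_ fun b hb =>
    ⟨1, le_rfl, fun p _ => coe_subset_locSet hP (Q.smul_mem p hb)⟩
  rintro b ⟨n, -, hb⟩
  have := hQ.isPrime
  obtain ⟨p, hpP, hpP'⟩ := SetLike.exists_of_lt hlt
  obtain ⟨r, hrP, hrb⟩ := mem_locSet.mp (hb (p ^ n) (Ideal.pow_mem_pow hpP n))
  have hrp : r * p ^ n ∉ P' :=
    Ideal.IsPrime.mul_notMem ‹_› (fun h => hrP (hlt.le h))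
      (fun h => hpP' (Ideal.IsPrime.mem_of_pow_mem ‹_› n h))
  exact hQ.mem_of_smul_mem_s12 hrp (by rwa [mul_smul])

theorem satSet_self_eq_univ [IsNoetherianRing R] (hQ : IsPrimaryIn P Q) :
    Q.satSet P = Set.univ := by
  obtain ⟨n, hn⟩ := hQ.exists_pow_le_colon_s12
  refine Set.eq_univ_of_forall fun b => ⟨n + 1, Nat.le_add_left 1 n, fun p hp => ?_⟩
  have hpb : p • b ∈ Q := mem_colon.mp (hn (Ideal.pow_le_pow_right n.le_succ hp)) b trivial
  exact coe_subset_locSet hQ.isPrime.ne_top hpb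

theorem satSet_eq_univ_of_not_le [P.IsPrime] (hQ : IsPrimaryIn P' Q) (h : ¬ P' ≤ P) :
    Q.satSet P = Set.univ := by
  obtain ⟨c, hcP, hcQ⟩ := hQ.exists_notMem_smul_mem_of_not_le h
  exact Set.eq_univ_of_forall fun b =>
    ⟨1, le_rfl, fun p _ => mem_locSet.mpr ⟨c, hcP, hcQ _⟩⟩

theorem satSet_eq_univ_of_not_lt [IsNoetherianRing R] [P.IsPrime] (hQ : IsPrimaryIn P' Q)
    (h : ¬ P' < P) : Q.satSet P = Set.univ := by
  by_cases hle : P' ≤ P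
  · obtain rfl : P' = P := by_contra fun hne => h (lt_of_le_of_ne hle hne)
    exact satSet_self_eq_univ hQ
  · exact satSet_eq_univ_of_not_le hQ hle

end satSet

end Submodule

theorem satSet_eq_iInf_general {R F : Type*} [CommRing R] [IsNoetherianRing R]
    [AddCommGroup F] [Module R F] {m : ℕ} (M : Submodule R F)
    (Q : Fin m → Submodule R F) (P : Fin m → Ideal R)
    (hQ : ∀ i, Submodule.IsPrimaryIn (P i) (Q i))
    (hdec : M = ⨅ i, Q i) (i : Fin m) :
    Submodule.satSet M (P i) = ((⨅ j ∈ {j | P j < P i}, Q j : Submodule R F) : Set F) := by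
  have := (hQ i).isPrime
  rw [hdec, Submodule.satSet_iInf]
  ext b
  simp only [Set.mem_iInter, SetLike.mem_coe, Submodule.mem_iInf, Set.mem_ofPred_eq]
  refine forall_congr' fun j => ?_
  by_cases hlt : P j < P i
  · rw [Submodule.satSet_eq_of_lt (hQ j) hlt (hQ i).isPrime.ne_top]
    simp only [SetLike.mem_coe, hlt, forall_const]
  · rw [Submodule.satSet_eq_univ_of_not_lt (hQ j) hlt]
    simp only [Set.mem_univ, hlt, IsEmpty.forall_iff]

/-- For a reduced primary decomposition `M = Q_1 ∩ … ∩ Q_m` and `P = P_i`,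
`(M_[P] :_F P^∞)` is the intersection of those `Q_j` with `P_j ⊊ P`
(the empty intersection being `F`). -/
theorem satSet_eq_iInf {R F : Type*} [CommRing R] [IsNoetherianRing R]
    [AddCommGroup F] [Module R F] [Module.Finite R F] {m : ℕ} (M : Submodule R F)
    (Q : Fin m → Submodule R F) (P : Fin m → Ideal R) (hprime : ∀ i, (P i).IsPrime)
    (hQ : ∀ i, Submodule.IsPrimaryIn (P i) (Q i))
    (hdec : M = ⨅ i, Q i) (hdist : Function.Injective P)
    (hirr : ∀ i, ¬ (⨅ j ∈ {j | j ≠ i}, Q j) ≤ Q i) (i : Fin m) :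
    Submodule.satSet M (P i) = ((⨅ j ∈ {j | P j < P i}, Q j : Submodule R F) : Set F) :=
  satSet_eq_iInf_general M Q P hQ hdec i
end

section
/- Let R be a commutative Noetherian ring, F a finitely generated R-module, M ⊆ F a submodule admitting a reduced primary decomposition M = Q_1 ∩ … ∩ Q_m with Q_i being P_i-primary, and let P = P_i be a minimal (isolated) associated prime of M. Let Q be a P-primary submodule of F with M ⊆ Q ⊇ M_[P]. Then the map (M_[P] :_F P^∞)/M_[P] → F/Q induced by the inclusion (M_[P] :_F P^∞) ⊆ F is injective if and only if Q = M_[P], i.e., if and only if Q is the (unique) P-primary component of M. -/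
/-!
Because `P = P_i` is minimal and the `P_j` are distinct, every other component `Q_j` is killed by
an element outside `P`, so `Q_i ⊆ M_[P]`. Since `P^n` kills `F/Q_i` for some `n`, this makes the
saturation `(M_[P] :_F P^∞)` all of `F`, and injectivity says exactly `Q ⊆ M_[P]`.
-/

namespace Submodule

variable {R F : Type*} [CommRing R] [AddCommGroup F] [Module R F]

theorem IsPrimaryIn.colon_not_le {P' P : Ideal R} {N : Submodule R F} (hN : IsPrimaryIn P' N)
    (hP : P.IsPrime) (hle : ¬ P' ≤ P) : ¬ N.colon ⊤ ≤ P := by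
  rw [hN.2.2, hP.radical_le_iff] at hle
  exact hle

theorem coe_subset_locSet_iInf {ι : Type*} [Fintype ι] [DecidableEq ι] {P : Ideal R}
    (hP : P.IsPrime) (Q : ι → Submodule R F) (i : ι) (hQ : ∀ j ≠ i, ¬ (Q j).colon ⊤ ≤ P) :
    (Q i : Set F) ⊆ locSet (⨅ j, Q j) P := by
  intro b hb hle
  set I := (Finset.univ.erase i).inf fun j ↦ (Q j).colon ⊤
  have hIP : ¬ I ≤ P := by
    rw [hP.inf_le']
    rintro ⟨j, hj, hjP⟩
    exact hQ j (Finset.ne_of_mem_erase hj) hjP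
  refine hIP (le_trans (fun r hr ↦ ?_) hle)
  rw [mem_colon_span_singleton, mem_iInf]
  intro j
  by_cases hji : j = i
  · subst hji
    exact smul_mem _ r hb
  · have hrj : r ∈ (Q j).colon ⊤ :=
      Finset.inf_le (f := fun j ↦ (Q j).colon ⊤) (Finset.mem_erase.2 ⟨hji, Finset.mem_univ j⟩) hr
    exact mem_colon.1 hrj b trivial

theorem satSet_eq_univ [IsNoetherianRing R] {M N : Submodule R F} {P : Ideal R}
    (hP : P = (N.colon ⊤).radical) (hN : (N : Set F) ⊆ locSet M P) :
    satSet M P = Set.univ := by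
  obtain ⟨n, hn⟩ := Ideal.exists_radical_pow_le_of_fg (N.colon ⊤) (IsNoetherian.noetherian _)
  refine Set.eq_univ_of_forall fun b ↦ ⟨n + 1, Nat.le_add_left 1 n, fun p hp ↦ hN ?_⟩
  have hpN : p ∈ N.colon ⊤ := hn (hP ▸ Ideal.pow_le_pow_right (Nat.le_succ n) hp)
  exact mem_colon.1 hpN b trivial

end Submodule

theorem injective_iff_eq_locSet_general {R F : Type*} [CommRing R] [IsNoetherianRing R]
    [AddCommGroup F] [Module R F] {m : ℕ} (M : Submodule R F)
    (Q : Fin m → Submodule R F) (P : Fin m → Ideal R) (hprime : ∀ i, (P i).IsPrime)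
    (hQ : ∀ i, Submodule.IsPrimaryIn (P i) (Q i))
    (hdec : M = ⨅ i, Q i) (hdist : Function.Injective P)
    (i : Fin m) (hmin : ∀ j, ¬ P j < P i)
    (Q' : Submodule R F)
    (hlocQ' : Submodule.locSet M (P i) ⊆ (Q' : Set F)) :
    (∀ b ∈ Submodule.satSet M (P i), ∀ c ∈ Submodule.satSet M (P i),
        b - c ∈ Q' → b - c ∈ Submodule.locSet M (P i)) ↔
      (Q' : Set F) = Submodule.locSet M (P i) := by
  classical
  have hcolon : ∀ j ≠ i, ¬ (Q j).colon ⊤ ≤ P i := fun j hji ↦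
    Submodule.IsPrimaryIn.colon_not_le (hQ j) (hprime i) fun hle ↦
      hmin j (lt_of_le_of_ne hle fun h ↦ hji (hdist h))
  have hQi : (Q i : Set F) ⊆ Submodule.locSet M (P i) :=
    hdec ▸ Submodule.coe_subset_locSet_iInf (hprime i) Q i hcolon
  have hsat : ∀ b, b ∈ Submodule.satSet M (P i) :=
    Set.eq_univ_iff_forall.1 (Submodule.satSet_eq_univ (hQ i).2.2 hQi)
  constructor
  · intro H
    refine Set.Subset.antisymm (fun b hb ↦ ?_) hlocQ'
    simpa using H b (hsat b) 0 (hsat 0) (by simpa using hb)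
  · intro h b _ c _ hbc
    exact h ▸ hbc

/-- Let `P = P_i` be a minimal associated prime of a reduced primary decomposition
`M = Q_1 ∩ … ∩ Q_m`, and `Q'` a `P`-primary submodule with `M ⊆ Q' ⊇ M_[P]`. The induced map
`(M_[P] :_F P^∞)/M_[P] → F/Q'` (sending the class of `b` mod `M_[P]` to its class mod `Q'`)
is injective iff `Q' = M_[P]`, i.e. iff `Q'` is the unique `P`-primary component of `M`. -/
theorem injective_iff_eq_locSet {R F : Type*} [CommRing R] [IsNoetherianRing R]
    [AddCommGroup F] [Module R F] [Module.Finite R F] {m : ℕ} (M : Submodule R F)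
    (Q : Fin m → Submodule R F) (P : Fin m → Ideal R) (hprime : ∀ i, (P i).IsPrime)
    (hQ : ∀ i, Submodule.IsPrimaryIn (P i) (Q i))
    (hdec : M = ⨅ i, Q i) (hdist : Function.Injective P)
    (hirr : ∀ i, ¬ (⨅ j ∈ {j | j ≠ i}, Q j) ≤ Q i)
    (i : Fin m) (hmin : ∀ j, ¬ P j < P i)
    (Q' : Submodule R F) (hQ' : Submodule.IsPrimaryIn (P i) Q') (hMQ' : M ≤ Q')
    (hlocQ' : Submodule.locSet M (P i) ⊆ (Q' : Set F)) :
    (∀ b ∈ Submodule.satSet M (P i), ∀ c ∈ Submodule.satSet M (P i),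
        b - c ∈ Q' → b - c ∈ Submodule.locSet M (P i)) ↔
      (Q' : Set F) = Submodule.locSet M (P i) :=
  injective_iff_eq_locSet_general M Q P hprime hQ hdec hdist i hmin Q' hlocQ'
end
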